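/- arXiv:1708.01393 — 4 statements merged into one kernel-verified Lean document; each statement's English description precedes it below -/
import Mathlib

section
/- Let n ≥ 4. Fix γ > 0 with γ ≤ min(2/(π + 3^{3/4}), 2^{(4−3n)/(n−1)}), and define, for r ∈ ℝ^{n−1} ∖ {0} and z ∈ ℝ, V(r, z) = γ((1 + |r|^{n−1})^{1/(n−1)} − 1) · arctan(z²) for z ≥ 0 and V(r, z) = 0 for z ≤ 0. Then V is C¹ on {r ≠ 0}, V(r, z) = 0 for z ≤ 0, |∇V(r, z)| ≤ |r|^{n−2} for all r ≠ 0 and z ∈ ℝ, and r · ∇_r V(r, z) ≥ |r|^{3−n} (∂_z V(r, z))² for all r ≠ 0 and z ∈ ℝ. -/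
/-!
Write `N = n - 1`. Then `V r z = γ f(‖r‖) g(z)` with `f(t) = (1 + t^N)^{1/N} - 1` and
`g(z) = arctan(z²)` for `z ≥ 0`, `g(z) = 0` otherwise; `g` is C¹ with `g' z = 2 max z 0 / (1 + z⁴)`.
Since `r ↦ ‖r‖^N` is C¹ for `N > 1`, `V` is C¹ on the whole space, with
`∇_r V = γ g(z) (1 + ‖r‖^N)^{1/N - 1} ‖r‖^{N-2} r`.
(V1) follows from `g ≤ π/2`, `g' ≤ 3^{3/4}/2` and `f(t) ≤ t^{N-1}`, which is where
`γ (π + 3^{3/4}) ≤ 2` enters. (V2) follows from `g'² ≤ 4g` (because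
`arctan x ≥ sin (arctan x) = x / √(1 + x²)`) and `2^{1/N-1} f(t)² ≤ (1 + t^N)^{1/N-1} t^{2N-2}`,
which is where `4γ ≤ 2^{1/N-1}`, i.e. `γ ≤ 2^{(4-3n)/(n-1)}`, enters.
-/

open Real RealInnerProductSpace

noncomputable section

def radialProfile (N t : ℝ) : ℝ := (1 + t ^ N) ^ (1 / N) - 1

section RadialProfile

variable {N t : ℝ}

theorem radialProfile_nonneg (hN : 0 ≤ N) (ht : 0 ≤ t) : 0 ≤ radialProfile N t := by
  rw [radialProfile, sub_nonneg]
  exact one_le_rpow (le_add_of_nonneg_right (by positivity)) (by positivity)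

theorem radialProfile_le_rpow (hN : 1 ≤ N) (ht : 0 ≤ t) : radialProfile N t ≤ t ^ N := by
  have h : (1 + t ^ N) ^ (1 / N) ≤ (1 + t ^ N) ^ (1 : ℝ) :=
    rpow_le_rpow_of_exponent_le (le_add_of_nonneg_right (by positivity))
      ((div_le_one (by linarith)).2 hN)
  rw [rpow_one] at h
  rw [radialProfile]
  linarith

theorem radialProfile_le_self (hN : 1 ≤ N) (ht : 0 ≤ t) : radialProfile N t ≤ t := by
  have h := rpow_add_rpow_le_add zero_le_one ht hN
  rw [one_rpow] at h
  rw [radialProfile]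
  linarith

theorem radialProfile_le_rpow_sub_one (hN : 2 ≤ N) (ht : 0 ≤ t) :
    radialProfile N t ≤ t ^ (N - 1) := by
  rcases le_total t 1 with h | h
  · exact (radialProfile_le_rpow (by linarith) ht).trans
      (rpow_le_rpow_of_exponent_ge' ht h (by linarith) (by linarith))
  · calc radialProfile N t ≤ t := radialProfile_le_self (by linarith) ht
      _ = t ^ (1 : ℝ) := (rpow_one t).symm
      _ ≤ t ^ (N - 1) := rpow_le_rpow_of_exponent_le h (by linarith)

theorem one_add_rpow_rpow_le_one (hN : 1 ≤ N) (ht : 0 ≤ t) : (1 + t ^ N) ^ (1 / N - 1) ≤ 1 :=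
  rpow_le_one_of_one_le_of_nonpos (le_add_of_nonneg_right (by positivity))
    (by rw [sub_nonpos, div_le_one (by linarith)]; exact hN)

/-- For `t ≤ 1` use `(1 + t ^ N) ^ (1/N - 1) ≥ 2 ^ (1/N - 1)` and `radialProfile N t ≤ t ^ N`;
for `t ≥ 1` use `(1 + t ^ N) ^ (1/N - 1) ≥ (2 t ^ N) ^ (1/N - 1)` and `radialProfile N t ≤ t`. -/
theorem two_rpow_mul_radialProfile_sq_le (hN : 3 ≤ N) (ht : 0 ≤ t) :
    2 ^ (1 / N - 1) * radialProfile N t ^ 2 ≤ (1 + t ^ N) ^ (1 / N - 1) * t ^ (2 * N - 2) := by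
  have hN0 : 0 < N := by linarith
  have hexp : 1 / N - 1 ≤ 0 := by rw [sub_nonpos, div_le_one hN0]; linarith
  have hf := radialProfile_nonneg hN0.le ht
  rcases le_total t 1 with h | h
  · have hw : (2 : ℝ) ^ (1 / N - 1) ≤ (1 + t ^ N) ^ (1 / N - 1) :=
      rpow_le_rpow_of_nonpos (by positivity) (by linarith [rpow_le_one ht h hN0.le]) hexp
    have hf2 : radialProfile N t ^ 2 ≤ t ^ (2 * N - 2) :=
      calc radialProfile N t ^ 2 ≤ (t ^ N) ^ 2 :=
            pow_le_pow_left₀ hf (radialProfile_le_rpow (by linarith) ht) 2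
        _ = t ^ (2 * N) := by rw [← rpow_mul_natCast ht]; ring_nf
        _ ≤ t ^ (2 * N - 2) := rpow_le_rpow_of_exponent_ge' ht h (by linarith) (by linarith)
    exact mul_le_mul hw hf2 (by positivity) (by positivity)
  · have ht0 : 0 < t := by linarith
    have htN : 1 ≤ t ^ N := one_le_rpow h hN0.le
    have hw : (2 * t ^ N) ^ (1 / N - 1) ≤ (1 + t ^ N) ^ (1 / N - 1) :=
      rpow_le_rpow_of_nonpos (by positivity) (by linarith) hexp
    have hw' : (2 * t ^ N) ^ (1 / N - 1) * t ^ (2 * N - 2) = 2 ^ (1 / N - 1) * t ^ (N - 1) := by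
      rw [mul_rpow (by norm_num) (by positivity), ← rpow_mul ht, mul_assoc, ← rpow_add ht0]
      congr 2
      field_simp
      ring
    have hf2 : radialProfile N t ^ 2 ≤ t ^ (N - 1) :=
      calc radialProfile N t ^ 2 ≤ t ^ 2 :=
            pow_le_pow_left₀ hf (radialProfile_le_self (by linarith) ht) 2
        _ = t ^ (2 : ℝ) := (rpow_two t).symm
        _ ≤ t ^ (N - 1) := rpow_le_rpow_of_exponent_le h (by linarith)
    calc 2 ^ (1 / N - 1) * radialProfile N t ^ 2 ≤ 2 ^ (1 / N - 1) * t ^ (N - 1) := by gcongr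
      _ = (2 * t ^ N) ^ (1 / N - 1) * t ^ (2 * N - 2) := hw'.symm
      _ ≤ (1 + t ^ N) ^ (1 / N - 1) * t ^ (2 * N - 2) := by gcongr

end RadialProfile

def axialProfile (z : ℝ) : ℝ := if 0 ≤ z then arctan (z ^ 2) else 0

def axialProfileDeriv (z : ℝ) : ℝ := 2 * max z 0 / (1 + z ^ 4)

theorem Real.div_sqrt_one_add_sq_le_arctan {x : ℝ} (hx : 0 ≤ x) : x / √(1 + x ^ 2) ≤ arctan x := by
  rw [← sin_arctan]
  exact sin_le (arctan_nonneg.mpr hx)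

theorem axialProfile_of_nonpos {z : ℝ} (hz : z ≤ 0) : axialProfile z = 0 := by
  rcases hz.lt_or_eq with hz | rfl
  · simp [axialProfile, hz.not_ge]
  · simp [axialProfile]

theorem axialProfile_nonneg (z : ℝ) : 0 ≤ axialProfile z := by
  unfold axialProfile; split_ifs <;> positivity

theorem axialProfile_le_pi_div_two (z : ℝ) : axialProfile z ≤ π / 2 := by
  unfold axialProfile; split_ifs
  · exact (arctan_lt_pi_div_two _).le
  · positivity

theorem axialProfileDeriv_nonneg (z : ℝ) : 0 ≤ axialProfileDeriv z := by
  unfold axialProfileDeriv; positivity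

theorem hasDerivAt_axialProfile (z : ℝ) : HasDerivAt axialProfile (axialProfileDeriv z) z := by
  have hpos : ∀ z, 0 ≤ z → HasDerivWithinAt axialProfile (axialProfileDeriv z) (Set.Ici 0) z := by
    intro z hz
    have h := ((hasDerivAt_arctan (z ^ 2)).comp z (hasDerivAt_pow 2 z)).hasDerivWithinAt
      (s := Set.Ici 0)
    refine (h.congr (fun w hw => if_pos hw) (if_pos hz)).congr_deriv ?_
    rw [axialProfileDeriv, max_eq_left hz]
    field_simp
    ring
  have hneg : ∀ z, z ≤ 0 → HasDerivWithinAt axialProfile (axialProfileDeriv z) (Set.Iic 0) z := by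
    intro z hz
    have h : axialProfileDeriv z = 0 := by simp [axialProfileDeriv, max_eq_right hz]
    rw [h]
    exact (hasDerivWithinAt_const z _ 0).congr (fun w hw => axialProfile_of_nonpos hw)
      (axialProfile_of_nonpos hz)
  rcases lt_trichotomy z 0 with hz | rfl | hz
  · exact (hneg z hz.le).hasDerivAt (Iic_mem_nhds hz)
  · simpa using (hneg 0 le_rfl).union (hpos 0 le_rfl)
  · exact (hpos z hz.le).hasDerivAt (Ici_mem_nhds hz)

theorem contDiff_axialProfile : ContDiff ℝ 1 axialProfile := by
  rw [contDiff_one_iff_deriv]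
  refine ⟨fun z => (hasDerivAt_axialProfile z).differentiableAt, ?_⟩
  rw [funext fun z => (hasDerivAt_axialProfile z).deriv]
  unfold axialProfileDeriv
  fun_prop (disch := intro; positivity)

theorem axialProfileDeriv_le (z : ℝ) : axialProfileDeriv z ≤ 3 ^ (3 / 4 : ℝ) / 2 := by
  set b : ℝ := 3 ^ (1 / 4 : ℝ)
  have hb : 0 < b := by positivity
  have hb4 : b ^ 4 = 3 := by
    rw [← rpow_natCast, ← rpow_mul (by norm_num)]; norm_num
  have hb3 : (3 : ℝ) ^ (3 / 4 : ℝ) = b ^ 3 := by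
    rw [← rpow_natCast, ← rpow_mul (by norm_num)]; norm_num
  rcases le_or_gt z 0 with hz | hz
  · rw [axialProfileDeriv, max_eq_right hz, mul_zero, zero_div]; positivity
  · rw [axialProfileDeriv, max_eq_left hz.le, hb3, div_le_div_iff₀ (by positivity) (by norm_num)]
    -- `b³ (1 + z⁴) - 4 z = (b z - 1)² ((b z)² + 2 b z + 3) / b` since `b⁴ = 3`
    have key : 0 ≤ (b * z - 1) ^ 2 * ((b * z) ^ 2 + 2 * (b * z) + 3) :=
      mul_nonneg (sq_nonneg _) (by nlinarith [sq_nonneg (b * z + 1)])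
    nlinarith [sq_nonneg (b * z)]

theorem axialProfileDeriv_sq_le (z : ℝ) : axialProfileDeriv z ^ 2 ≤ 4 * axialProfile z := by
  rcases le_or_gt z 0 with hz | hz
  · rw [axialProfileDeriv, max_eq_right hz, axialProfile_of_nonpos hz]; simp
  · rw [axialProfileDeriv, max_eq_left hz.le, axialProfile, if_pos hz.le]
    have hs : √(1 + (z ^ 2) ^ 2) ≤ (1 + z ^ 4) ^ 2 := by
      rw [sqrt_le_left (by positivity), ← pow_mul, ← pow_mul]
      exact le_self_pow₀ (by simp only [le_add_iff_nonneg_right]; positivity) (by norm_num)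
    calc (2 * z / (1 + z ^ 4)) ^ 2 = 4 * (z ^ 2 / (1 + z ^ 4) ^ 2) := by rw [div_pow]; ring
      _ ≤ 4 * (z ^ 2 / √(1 + (z ^ 2) ^ 2)) := by gcongr
      _ ≤ 4 * arctan (z ^ 2) := by gcongr; exact div_sqrt_one_add_sq_le_arctan (by positivity)

def potential {E : Type*} [NormedAddCommGroup E] (N γ : ℝ) (r : E) (z : ℝ) : ℝ :=
  γ * radialProfile N ‖r‖ * axialProfile z

section Potential

variable {E : Type*} [NormedAddCommGroup E] {N γ : ℝ}

theorem potential_of_nonpos (r : E) {z : ℝ} (hz : z ≤ 0) : potential N γ r z = 0 := by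
  rw [potential, axialProfile_of_nonpos hz, mul_zero]

theorem deriv_potential (r : E) (z : ℝ) :
    deriv (potential N γ r) z = γ * radialProfile N ‖r‖ * axialProfileDeriv z :=
  ((hasDerivAt_axialProfile z).const_mul _).deriv

variable [InnerProductSpace ℝ E]

theorem hasFDerivAt_radialProfile_norm (hN : 1 < N) (r : E) :
    HasFDerivAt (fun r : E => radialProfile N ‖r‖)
      (((1 + ‖r‖ ^ N) ^ (1 / N - 1) * ‖r‖ ^ (N - 2)) • innerSL ℝ r) r := by
  refine ((((hasFDerivAt_norm_rpow r hN).const_add 1).rpow_const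
    (p := 1 / N) (Or.inl (by positivity))).sub_const 1).congr_fderiv ?_
  rw [smul_smul]
  congr 1
  field_simp

theorem contDiff_potential (hN : 1 < N) :
    ContDiff ℝ 1 (fun p : E × ℝ => potential N γ p.1 p.2) := by
  have hroot : ContDiff ℝ 1 (fun r : E => (1 + ‖r‖ ^ N) ^ (1 / N)) :=
    (contDiff_const.add (contDiff_norm_rpow hN)).rpow_const_of_ne fun r => by positivity
  exact (contDiff_const.mul ((hroot.sub contDiff_const).comp contDiff_fst)).mul
    (contDiff_axialProfile.comp contDiff_snd)

theorem gradient_potential [CompleteSpace E] (hN : 1 < N) (r : E) (z : ℝ) :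
    gradient (potential N γ · z) r
      = (γ * axialProfile z * ((1 + ‖r‖ ^ N) ^ (1 / N - 1) * ‖r‖ ^ (N - 2))) • r := by
  refine HasGradientAt.gradient (hasGradientAt_iff_hasFDerivAt.2 ?_)
  refine (((hasFDerivAt_radialProfile_norm hN r).const_mul γ).mul_const
    (axialProfile z)).congr_fderiv ?_
  ext v
  simp only [one_div, smul_apply, coe_innerSL_apply, smul_eq_mul, map_smul,
    InnerProductSpace.toDual_apply_apply]
  ring

theorem sqrt_norm_gradient_potential_sq_add_deriv_sq_le [CompleteSpace E] (hN : 2 ≤ N)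
    (hγ : 0 ≤ γ) (hγ' : γ * (π + 3 ^ (3 / 4 : ℝ)) ≤ 2) (r : E) (z : ℝ) :
    √(‖gradient (potential N γ · z) r‖ ^ 2 + deriv (potential N γ r) z ^ 2) ≤ ‖r‖ ^ (N - 1) := by
  have ht := norm_nonneg r
  have hpow : ‖r‖ ^ (N - 2) * ‖r‖ = ‖r‖ ^ (N - 1) := by
    rw [← rpow_add_one' (y := N - 2) ht (ne_of_gt (by linarith))]
    ring_nf
  have hA : ‖gradient (potential N γ · z) r‖ ≤ γ * (π / 2) * ‖r‖ ^ (N - 1) := by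
    have hw := one_add_rpow_rpow_le_one (N := N) (by linarith) ht
    have hg := axialProfile_nonneg z
    have hnorm : ‖gradient (potential N γ · z) r‖
        = γ * axialProfile z * ((1 + ‖r‖ ^ N) ^ (1 / N - 1) * ‖r‖ ^ (N - 1)) := by
      rw [gradient_potential (by linarith), norm_smul, norm_of_nonneg (by positivity), ← hpow]
      ring
    rw [hnorm]
    gcongr
    · exact axialProfile_le_pi_div_two z
    · exact mul_le_of_le_one_left (by positivity) hw
  have hB : deriv (potential N γ r) z ≤ γ * (‖r‖ ^ (N - 1) * (3 ^ (3 / 4 : ℝ) / 2)) := by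
    rw [deriv_potential, mul_assoc]
    exact mul_le_mul_of_nonneg_left (mul_le_mul (radialProfile_le_rpow_sub_one hN ht)
      (axialProfileDeriv_le z) (axialProfileDeriv_nonneg z) (by positivity)) hγ
  have hB₀ : 0 ≤ deriv (potential N γ r) z := by
    rw [deriv_potential]
    have := radialProfile_nonneg (N := N) (by linarith) ht
    have := axialProfileDeriv_nonneg z
    positivity
  have hsum : ‖gradient (potential N γ · z) r‖ + deriv (potential N γ r) z ≤ ‖r‖ ^ (N - 1) := by
    have hT : 0 ≤ ‖r‖ ^ (N - 1) := by positivity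
    nlinarith [mul_le_mul_of_nonneg_right hγ' hT]
  rw [sqrt_le_left (by positivity)]
  nlinarith [norm_nonneg (gradient (potential N γ · z) r)]

theorem rpow_mul_deriv_potential_sq_le_inner_gradient [CompleteSpace E] (hN : 3 ≤ N)
    (hγ : 0 ≤ γ) (hγ' : 4 * γ ≤ 2 ^ (1 / N - 1)) (r : E) (z : ℝ) :
    ‖r‖ ^ (2 - N) * deriv (potential N γ r) z ^ 2 ≤ ⟪r, gradient (potential N γ · z) r⟫ := by
  have ht := norm_nonneg r
  rw [gradient_potential (by linarith), deriv_potential, real_inner_smul_right,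
    real_inner_self_eq_norm_sq]
  set t := ‖r‖
  set f := radialProfile N t
  set w := (1 + t ^ N) ^ (1 / N - 1)
  have hg := axialProfile_nonneg z
  have hpow : t ^ (2 - N) * t ^ (2 * N - 2) = t ^ (N - 2) * t ^ 2 := by
    rw [← rpow_add' ht (ne_of_gt (by linarith)), ← rpow_natCast,
      ← rpow_add' ht (ne_of_gt (by push_cast; linarith))]
    ring_nf
  calc t ^ (2 - N) * (γ * f * axialProfileDeriv z) ^ 2
      = γ * t ^ (2 - N) * (γ * f ^ 2) * axialProfileDeriv z ^ 2 := by ring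
    _ ≤ γ * t ^ (2 - N) * (γ * f ^ 2) * (4 * axialProfile z) := by
      gcongr; exact axialProfileDeriv_sq_le z
    _ = γ * axialProfile z * t ^ (2 - N) * (4 * γ * f ^ 2) := by ring
    _ ≤ γ * axialProfile z * t ^ (2 - N) * (2 ^ (1 / N - 1) * f ^ 2) := by gcongr
    _ ≤ γ * axialProfile z * t ^ (2 - N) * (w * t ^ (2 * N - 2)) :=
      mul_le_mul_of_nonneg_left (two_rpow_mul_radialProfile_sq_le hN ht) (by positivity)
    _ = γ * axialProfile z * (w * t ^ (N - 2)) * t ^ 2 := by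
      rw [← mul_assoc, mul_right_comm _ w, mul_assoc _ (t ^ (2 - N)), hpow]; ring

end Potential

end

/-- the explicit potential `V` giving a counterexample to quadratic
rigidity in dimension `n ≥ 4`, satisfies the three properties (V0)-(V2). -/
theorem counterexample_potential_properties
    (n : ℕ) (hn : 4 ≤ n) (γ : ℝ) (hγpos : 0 < γ)
    (hγ : γ ≤ min (2 / (Real.pi + (3 : ℝ) ^ ((3 : ℝ) / 4)))
      ((2 : ℝ) ^ (((4 : ℝ) - 3 * (n : ℝ)) / ((n : ℝ) - 1))))
    (V : EuclideanSpace ℝ (Fin (n - 1)) → ℝ → ℝ)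
    (hV : ∀ r z, V r z =
      if 0 ≤ z then γ * ((1 + ‖r‖ ^ ((n : ℝ) - 1)) ^ ((1 : ℝ) / ((n : ℝ) - 1)) - 1)
        * Real.arctan (z ^ 2) else 0) :
    -- V is C¹ away from the axis {r = 0}
    ContDiffOn ℝ 1 (fun p : EuclideanSpace ℝ (Fin (n - 1)) × ℝ => V p.1 p.2)
      {p : EuclideanSpace ℝ (Fin (n - 1)) × ℝ | p.1 ≠ 0}
    -- (V0): V vanishes for z ≤ 0
    ∧ (∀ r z, z ≤ 0 → V r z = 0)
    -- (V1): |∇V| ≤ |r|^{n-2}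
    ∧ (∀ (r : EuclideanSpace ℝ (Fin (n - 1))), r ≠ 0 → ∀ z : ℝ,
      Real.sqrt (‖gradient (fun r' => V r' z) r‖ ^ 2 + (deriv (V r) z) ^ 2)
        ≤ ‖r‖ ^ ((n : ℝ) - 2))
    -- (V2): r · ∇_r V ≥ |r|^{3-n} (∂_z V)²
    ∧ (∀ (r : EuclideanSpace ℝ (Fin (n - 1))), r ≠ 0 → ∀ z : ℝ,
      ‖r‖ ^ ((3 : ℝ) - (n : ℝ)) * (deriv (V r) z) ^ 2
        ≤ ⟪r, gradient (fun r' => V r' z) r⟫) := by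
  have hN : (3 : ℝ) ≤ (n : ℝ) - 1 := by
    have : (4 : ℝ) ≤ n := by exact_mod_cast hn
    linarith
  obtain rfl : V = potential ((n : ℝ) - 1) γ := by
    funext r z
    rw [hV, potential, radialProfile, axialProfile]
    split_ifs <;> ring
  have hγ₁ : γ * (π + 3 ^ (3 / 4 : ℝ)) ≤ 2 :=
    (le_div_iff₀ (by positivity)).1 (hγ.trans (min_le_left _ _))
  have hγ₂ : 4 * γ ≤ 2 ^ (1 / ((n : ℝ) - 1) - 1) := by
    have h : 1 / ((n : ℝ) - 1) - 1 = (4 - 3 * n) / (n - 1) + 2 := by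
      field_simp
      ring
    rw [h, rpow_add two_pos, rpow_two]
    linarith [hγ.trans (min_le_right _ _)]
  refine ⟨(contDiff_potential (by linarith)).contDiffOn, fun r z hz => potential_of_nonpos r hz,
    fun r _ z => ?_, fun r _ z => ?_⟩
  · convert sqrt_norm_gradient_potential_sq_add_deriv_sq_le (hN.trans' (by norm_num)) hγpos.le
      hγ₁ r z using 2
    ring
  · convert rpow_mul_deriv_potential_sq_le_inner_gradient hN hγpos.le hγ₂ r z using 3
    ring
end

section
/- (No separable counterexample in dimension 3) Let V(r, z) = ψ₁(|r|) ψ₂(z) be a C¹ function on ℝ³ (r ∈ ℝ², z ∈ ℝ) satisfying: V(r, z) = 0 for all z ≤ 0; |∇V(r, z)| ≤ 1 for all r ≠ 0 and z; and r · ∇_r V(r, z) ≥ c (∂_z V(r, z))² for some c > 0 and all r ≠ 0, z. Then V ≡ 0. -/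
/-!
Along a ray `ρ ↦ ρ • e`, separability makes every slice `V (ρ • e) ·` a multiple `k ρ` of one
nonconstant slice. At a height `z₁` where that slice has nonzero derivative `q`, condition (V2)
becomes the Riccati inequality `ρ φ' ≥ γ φ²` for `φ ρ = V (ρ • e) z₁` with `γ > 0`, whose only
solution on `(0, ∞)` is `φ ≡ 0`. Then `φ' ≡ 0`, contradicting `ρ φ' ≥ c (k ρ q)² > 0` at the
reference radius. Continuity extends `V = 0` to the axis `r = 0`.
-/

open MeasureTheory Real RealInnerProductSpace

open Set Filter

theorem nonpos_of_sq_le_mul_deriv {φ : ℝ → ℝ} {γ : ℝ} (hγ : 0 < γ)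
    (hφ : ∀ ρ > 0, DifferentiableAt ℝ φ ρ) (h : ∀ ρ > 0, γ * φ ρ ^ 2 ≤ ρ * deriv φ ρ)
    {ρ₀ : ℝ} (hρ₀ : 0 < ρ₀) : φ ρ₀ ≤ 0 := by
  by_contra! hpos
  have hmono : MonotoneOn φ (Ioi 0) := by
    refine monotoneOn_of_deriv_nonneg (convex_Ioi 0)
      (fun ρ hρ => (hφ ρ hρ).continuousAt.continuousWithinAt) ?_ ?_ <;> rw [interior_Ioi]
    · exact fun ρ hρ => (hφ ρ hρ).differentiableWithinAt
    · exact fun ρ hρ =>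
        (mul_nonneg_iff_of_pos_left hρ).mp ((mul_nonneg hγ.le (sq_nonneg _)).trans (h ρ hρ))
  have hφpos : ∀ ρ ∈ Ici ρ₀, 0 < φ ρ := fun ρ hρ =>
    hpos.trans_le (hmono hρ₀ (hρ₀.trans_le hρ) hρ)
  -- `γ log ρ + 1 / φ ρ` is nonincreasing, yet `1 / φ ρ > 0` and `γ log ρ → ∞`.
  set w : ℝ → ℝ := fun ρ => γ * log ρ + (φ ρ)⁻¹
  have hw' : ∀ ρ ∈ Ici ρ₀, HasDerivAt w (γ * ρ⁻¹ + -deriv φ ρ / φ ρ ^ 2) ρ := fun ρ hρ =>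
    ((hasDerivAt_log (hρ₀.trans_le hρ).ne').const_mul γ).add
      ((hφ ρ (hρ₀.trans_le hρ)).hasDerivAt.inv (hφpos ρ hρ).ne')
  have hanti : AntitoneOn w (Ici ρ₀) := by
    refine antitoneOn_of_hasDerivWithinAt_nonpos
      (f' := fun ρ => γ * ρ⁻¹ + -deriv φ ρ / φ ρ ^ 2) (convex_Ici ρ₀)
      (fun ρ hρ => (hw' ρ hρ).continuousAt.continuousWithinAt) ?_ ?_ <;> rw [interior_Ici]
    · exact fun ρ hρ => (hw' ρ (Ioi_subset_Ici_self hρ)).hasDerivWithinAt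
    · intro ρ hρ
      have hρ' : 0 < ρ := hρ₀.trans hρ
      have hφρ := hφpos ρ (Ioi_subset_Ici_self hρ)
      have : γ / ρ ≤ deriv φ ρ / φ ρ ^ 2 := by
        rw [div_le_div_iff₀ hρ' (by positivity)]
        linarith [h ρ hρ']
      rw [neg_div, ← div_eq_mul_inv]
      linarith
  obtain ⟨ρ, hlog, hρ⟩ := (((tendsto_log_atTop.const_mul_atTop hγ).eventually_gt_atTop (w ρ₀)).and
    (eventually_ge_atTop ρ₀)).exists
  have hwρ : w ρ ≤ w ρ₀ := hanti self_mem_Ici hρ hρ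
  have : 0 < (φ ρ)⁻¹ := inv_pos.mpr (hφpos ρ hρ)
  simp only [w] at hwρ hlog
  linarith

theorem eq_zero_of_sq_le_mul_deriv {φ : ℝ → ℝ} {γ : ℝ} (hγ : 0 < γ)
    (hφ : ∀ ρ > 0, DifferentiableAt ℝ φ ρ) (h : ∀ ρ > 0, γ * φ ρ ^ 2 ≤ ρ * deriv φ ρ)
    {ρ₀ : ℝ} (hρ₀ : 0 < ρ₀) : φ ρ₀ = 0 := by
  refine le_antisymm (nonpos_of_sq_le_mul_deriv hγ hφ h hρ₀) ?_
  -- `ρ ↦ -φ ρ⁻¹` satisfies the same inequality.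
  have hinv : ∀ ρ > 0, HasDerivAt (fun ρ => -φ ρ⁻¹) (-(deriv φ ρ⁻¹ * -(ρ ^ 2)⁻¹)) ρ :=
    fun ρ hρ => ((hφ _ (inv_pos.mpr hρ)).hasDerivAt.comp ρ (hasDerivAt_inv hρ.ne')).neg
  have := nonpos_of_sq_le_mul_deriv (φ := fun ρ => -φ ρ⁻¹) hγ
    (fun ρ hρ => (hinv ρ hρ).differentiableAt) (fun ρ hρ => ?_) (inv_pos.mpr hρ₀)
  · simpa using this
  rw [(hinv ρ hρ).deriv, neg_sq]
  convert h ρ⁻¹ (inv_pos.mpr hρ) using 1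
  field_simp

theorem eq_zero_of_separable_of_sq_deriv_le {u : ℝ → ℝ → ℝ} {a b : ℝ → ℝ} {c : ℝ} (hc : 0 < c)
    (hsep : ∀ ρ > 0, ∀ z, u ρ z = a ρ * b z)
    (hdρ : ∀ ρ > 0, ∀ z, DifferentiableAt ℝ (fun ρ => u ρ z) ρ)
    (hdz : ∀ ρ > 0, Differentiable ℝ (u ρ)) (hzero : ∀ ρ > 0, u ρ 0 = 0)
    (hineq : ∀ ρ > 0, ∀ z, c * deriv (u ρ) z ^ 2 ≤ ρ * deriv (fun ρ => u ρ z) ρ) :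
    ∀ ρ > 0, ∀ z, u ρ z = 0 := by
  by_contra! ⟨ρ₀, hρ₀, z₀, hne⟩
  set k : ℝ → ℝ := fun ρ => u ρ z₀ / u ρ₀ z₀
  have hscale : ∀ ρ > 0, u ρ = fun z => k ρ * u ρ₀ z := fun ρ hρ => by
    ext z
    obtain ⟨ha, hb⟩ := mul_ne_zero_iff.mp (hsep ρ₀ hρ₀ z₀ ▸ hne)
    simp only [k]
    rw [hsep ρ hρ, hsep ρ hρ, hsep ρ₀ hρ₀, hsep ρ₀ hρ₀]
    field_simp
  obtain ⟨z₁, hq⟩ : ∃ z₁, deriv (u ρ₀) z₁ ≠ 0 := by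
    by_contra! h
    exact hne (by rw [is_const_of_deriv_eq_zero (hdz ρ₀ hρ₀) h z₀ 0, hzero ρ₀ hρ₀])
  set q := deriv (u ρ₀) z₁
  have hdz₁ : ∀ ρ > 0, deriv (u ρ) z₁ = k ρ * q := fun ρ hρ => by
    rw [hscale ρ hρ, deriv_const_mul _ (hdz ρ₀ hρ₀ z₁)]
  set φ : ℝ → ℝ := fun ρ => u ρ z₁
  have hφk : ∀ ρ > 0, φ ρ = k ρ * φ ρ₀ := fun ρ hρ => congrFun (hscale ρ hρ) z₁
  have hφ : ∀ ρ > 0, φ ρ = 0 := by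
    rcases eq_or_ne (φ ρ₀) 0 with hs | hs
    · intro ρ hρ
      rw [hφk ρ hρ, hs, mul_zero]
    refine fun ρ hρ => eq_zero_of_sq_le_mul_deriv (γ := c * q ^ 2 / φ ρ₀ ^ 2) (by positivity)
      (fun ρ hρ => hdρ ρ hρ z₁) (fun ρ hρ => ?_) hρ
    convert hineq ρ hρ z₁ using 1
    rw [hdz₁ ρ hρ, show u ρ z₁ = φ ρ from rfl, hφk ρ hρ]
    field_simp
  have hφ' : deriv φ ρ₀ = 0 := by
    rw [EventuallyEq.deriv_eq (f₁ := φ) (f := fun _ => 0)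
      (eventually_of_mem (Ioi_mem_nhds hρ₀) hφ), deriv_const]
  have := hineq ρ₀ hρ₀ z₁
  rw [hdz₁ ρ₀ hρ₀, show k ρ₀ = 1 from div_self hne, one_mul] at this
  change _ ≤ ρ₀ * deriv φ ρ₀ at this
  rw [hφ', mul_zero] at this
  exact this.not_gt (by positivity)

theorem deriv_comp_smul_eq_inner_gradient {F : Type*} [NormedAddCommGroup F]
    [InnerProductSpace ℝ F] [CompleteSpace F] {f : F → ℝ} {v : F} {t : ℝ}
    (hf : DifferentiableAt ℝ f (t • v)) :
    deriv (fun s : ℝ => f (s • v)) t = ⟪v, gradient f (t • v)⟫ := by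
  have hline : HasDerivAt (fun s : ℝ => s • v) v t := by
    simpa using (hasDerivAt_id t).smul_const v
  rw [HasDerivAt.deriv (f := fun s => f (s • v)) (hf.hasFDerivAt.comp_hasDerivAt t hline),
    real_inner_comm, gradient, InnerProductSpace.toDual_symm_apply]

theorem no_separable_counterexample_dim3_general
    (ψ₁ ψ₂ : ℝ → ℝ) (c : ℝ) (hc : 0 < c)
    (V : EuclideanSpace ℝ (Fin 2) → ℝ → ℝ)
    (hVsep : ∀ r z, V r z = ψ₁ ‖r‖ * ψ₂ z)
    (hC1 : ContDiff ℝ 1 (fun p : EuclideanSpace ℝ (Fin 2) × ℝ => V p.1 p.2))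
    (hV0 : ∀ r z, z ≤ 0 → V r z = 0)
    -- (V2) for n = 3: r · ∇_r V ≥ c (∂_z V)²
    (hV2 : ∀ (r : EuclideanSpace ℝ (Fin 2)), r ≠ 0 → ∀ z : ℝ,
      c * (deriv (V r) z) ^ 2 ≤ ⟪r, gradient (fun r' => V r' z) r⟫) :
    ∀ r z, V r z = 0 := by
  have hV : Differentiable ℝ (fun p : EuclideanSpace ℝ (Fin 2) × ℝ => V p.1 p.2) :=
    hC1.differentiable one_ne_zero
  have hVr : ∀ z, Differentiable ℝ (fun r => V r z) := fun z =>
    hV.comp (differentiable_id.prodMk (differentiable_const z))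
  have hVz : ∀ r, Differentiable ℝ (V r) := fun r =>
    hV.comp ((differentiable_const r).prodMk differentiable_id)
  obtain ⟨e, he⟩ := exists_norm_eq (EuclideanSpace ℝ (Fin 2)) zero_le_one
  have he0 : e ≠ 0 := norm_ne_zero_iff.mp (he ▸ one_ne_zero)
  have hnorm : ∀ ρ > 0, ‖ρ • e‖ = ρ := fun ρ hρ => by
    rw [norm_smul, he, mul_one, norm_of_nonneg hρ.le]
  have hray : ∀ ρ > (0 : ℝ), ∀ z, V (ρ • e) z = 0 :=
    eq_zero_of_separable_of_sq_deriv_le (u := fun ρ z => V (ρ • e) z) hc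
      (fun ρ hρ z => by rw [hVsep, hnorm ρ hρ])
      (fun ρ _ z => ((hVr z).comp (differentiable_id.smul_const e)).differentiableAt)
      (fun ρ _ => hVz _) (fun ρ _ => hV0 _ 0 le_rfl)
      (fun ρ hρ z => by
        rw [deriv_comp_smul_eq_inner_gradient (hVr z _), ← real_inner_smul_left]
        exact hV2 _ (smul_ne_zero hρ.ne' he0) z)
  have hoff : ∀ r ≠ (0 : EuclideanSpace ℝ (Fin 2)), ∀ z, V r z = 0 := fun r hr z => by
    rw [hVsep, ← hnorm ‖r‖ (norm_pos_iff.mpr hr), ← hVsep, hray _ (norm_pos_iff.mpr hr)]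
  intro r z
  exact congrFun ((hVr z).continuous.ext_on (dense_compl_singleton 0) continuous_const
    fun r hr => hoff r hr z) r

/-- no separable counterexample in dimension 3. -/
theorem no_separable_counterexample_dim3
    (ψ₁ ψ₂ : ℝ → ℝ) (c : ℝ) (hc : 0 < c)
    (V : EuclideanSpace ℝ (Fin 2) → ℝ → ℝ)
    (hVsep : ∀ r z, V r z = ψ₁ ‖r‖ * ψ₂ z)
    (hC1 : ContDiff ℝ 1 (fun p : EuclideanSpace ℝ (Fin 2) × ℝ => V p.1 p.2))
    (hV0 : ∀ r z, z ≤ 0 → V r z = 0)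
    -- (V1) for n = 3: |∇V| ≤ |r|
    (hV1 : ∀ (r : EuclideanSpace ℝ (Fin 2)), r ≠ 0 → ∀ z : ℝ,
      Real.sqrt (‖gradient (fun r' => V r' z) r‖ ^ 2 + (deriv (V r) z) ^ 2) ≤ ‖r‖)
    -- (V2) for n = 3: r · ∇_r V ≥ c (∂_z V)²
    (hV2 : ∀ (r : EuclideanSpace ℝ (Fin 2)), r ≠ 0 → ∀ z : ℝ,
      c * (deriv (V r) z) ^ 2 ≤ ⟪r, gradient (fun r' => V r' z) r⟫) :
    ∀ r z, V r z = 0 :=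
  no_separable_counterexample_dim3_general ψ₁ ψ₂ c hc V hVsep hC1 hV0 hV2
end

section
/- Let z_k → η weakly-* in L^∞ with sup_k ‖z_k‖_∞ < ∞ (vector fields in ℝⁿ with divergence a Radon measure), let S_k, Σ be closed oriented H^{n−1}-rectifiable sets with locally finite H^{n−1}-measure such that H^{n−1}⌊S_k ⇀ H^{n−1}⌊Σ weakly as measures and |div z_k|⌊(ℝⁿ ∖ S_k) ⇀ 0. Then div η = 0 on ℝⁿ ∖ Σ in the distributional sense. -/
open MeasureTheory Real RealInnerProductSpace Filter Topology

/-- A set `S ⊆ ℝⁿ` is countably `H^d`-rectifiable if, up to an `H^d`-null set,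
it is covered by countably many Lipschitz images of `ℝ^d`. -/
def HausdorffRectifiable (n d : ℕ) (S : Set (EuclideanSpace ℝ (Fin n))) : Prop :=
  ∃ g : ℕ → EuclideanSpace ℝ (Fin d) → EuclideanSpace ℝ (Fin n),
    (∀ i, ∃ K : NNReal, LipschitzWith K (g i)) ∧
    μH[(d : ℝ)] (S \ ⋃ i, Set.range (g i)) = 0

/-!
Test the divergence of `z_k` against `φ`, which vanishes on `Σ`: the trace bound turns
`|∫ z_k · ∇φ| ≤ ∫ |φ| d|div z_k|` into `2M ∫_{S_k} |φ| dH^{n-1} + ∫_{S_kᶜ} |φ| d|div z_k|`.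
The first term tends to `2M ∫_Σ |φ| dH^{n-1} = 0` and the second to `0`, while the left-hand side
tends to `|∫ η · ∇φ|` by weak-* convergence.
-/

theorem MeasureTheory.Measure.le_restrict_add_restrict_compl {X : Type*} [MeasurableSpace X]
    (μ : Measure X) (s : Set X) : μ ≤ μ.restrict s + μ.restrict sᶜ := by
  simpa using μ.restrict_union_le s sᶜ

theorem MeasureTheory.isLocallyFiniteMeasure_restrict_of_forall_ball {X : Type*}
    [PseudoMetricSpace X] [MeasurableSpace X] [OpensMeasurableSpace X] {μ : Measure X}
    {s : Set X} (h : ∀ x, ∃ r > 0, μ (s ∩ Metric.ball x r) < ⊤) :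
    IsLocallyFiniteMeasure (μ.restrict s) where
  finiteAtNhds x := by
    obtain ⟨r, hr, hfin⟩ := h x
    refine ⟨Metric.ball x r, Metric.ball_mem_nhds x hr, ?_⟩
    rwa [Measure.restrict_apply Metric.isOpen_ball.measurableSet, Set.inter_comm]

theorem MeasureTheory.setIntegral_eq_zero_of_tsupport_subset_compl {X E : Type*}
    [TopologicalSpace X] [MeasurableSpace X] [NormedAddCommGroup E] [NormedSpace ℝ E]
    {μ : Measure X} {f : X → E} {s : Set X} (h : tsupport f ⊆ sᶜ) :
    ∫ x in s, f x ∂μ = 0 :=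
  setIntegral_eq_zero_of_forall_eq_zero fun _ hx =>
    image_eq_zero_of_notMem_tsupport fun hf => h hf hx

theorem MeasureTheory.integral_le_mul_integral_add_integral_restrict_compl {X : Type*}
    [TopologicalSpace X] [MeasurableSpace X] [OpensMeasurableSpace X]
    {ν μ : Measure X} [IsLocallyFiniteMeasure ν] [IsLocallyFiniteMeasure μ]
    {s : Set X} {c : ENNReal} (hc : c ≠ ⊤) (hνμ : ν.restrict s ≤ c • μ)
    {g : X → ℝ} (hg : Continuous g) (hgc : HasCompactSupport g) (hg0 : 0 ≤ g) :
    ∫ x, g x ∂ν ≤ c.toReal * ∫ x, g x ∂μ + ∫ x, g x ∂ν.restrict sᶜ := by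
  have hint : ∀ ρ : Measure X, IsLocallyFiniteMeasure ρ → Integrable g ρ :=
    fun _ _ => hg.integrable_of_hasCompactSupport hgc
  have hgν := hint ν inferInstance
  calc ∫ x, g x ∂ν
      ≤ ∫ x, g x ∂(ν.restrict s + ν.restrict sᶜ) :=
        integral_mono_measure (ν.le_restrict_add_restrict_compl s) (.of_forall hg0)
          (hgν.restrict.add_measure hgν.restrict)
    _ = ∫ x, g x ∂ν.restrict s + ∫ x, g x ∂ν.restrict sᶜ :=
        integral_add_measure hgν.restrict hgν.restrict
    _ ≤ ∫ x, g x ∂(c • μ) + ∫ x, g x ∂ν.restrict sᶜ :=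
        add_le_add (integral_mono_measure hνμ (.of_forall hg0)
          ((hint μ inferInstance).smul_measure hc)) le_rfl
    _ = c.toReal * ∫ x, g x ∂μ + ∫ x, g x ∂ν.restrict sᶜ := by
        rw [integral_smul_measure, smul_eq_mul]

theorem ContDiff.integrable_gradient_of_hasCompactSupport {E : Type*}
    [NormedAddCommGroup E] [InnerProductSpace ℝ E] [CompleteSpace E] [MeasurableSpace E]
    [OpensMeasurableSpace E] {μ : Measure E} [IsFiniteMeasureOnCompacts μ] {φ : E → ℝ}
    (hφ : ContDiff ℝ 1 φ) (hφc : HasCompactSupport φ) : Integrable (gradient φ) μ :=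
  ((InnerProductSpace.toDual ℝ E).symm.continuous.comp
      (hφ.continuous_fderiv one_ne_zero)).integrable_of_hasCompactSupport
    ((hφc.fderiv ℝ).comp_left (map_zero _))

theorem divergence_vanishes_off_limit_set_general
    (n : ℕ) (M : ℝ)
    (z : ℕ → EuclideanSpace ℝ (Fin n) → EuclideanSpace ℝ (Fin n))
    (η : EuclideanSpace ℝ (Fin n) → EuclideanSpace ℝ (Fin n))
    (S : ℕ → Set (EuclideanSpace ℝ (Fin n))) (Sigma : Set (EuclideanSpace ℝ (Fin n)))
    (hSlocfin : ∀ k x, ∃ r > (0 : ℝ), μH[(n : ℝ) - 1] (S k ∩ Metric.ball x r) < ⊤)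
    -- (i) z_k → η in L^∞-w*
    (hwstar : ∀ f : EuclideanSpace ℝ (Fin n) → EuclideanSpace ℝ (Fin n),
      Integrable f volume →
      Tendsto (fun k => ∫ x, ⟪f x, z k x⟫) atTop (𝓝 (∫ x, ⟪f x, η x⟫)))
    -- ν k = |div z_k| as a finite measure
    (ν : ℕ → Measure (EuclideanSpace ℝ (Fin n)))
    (hνfin : ∀ k, IsFiniteMeasure (ν k))
    (hdivmeas : ∀ k, ∀ φ : EuclideanSpace ℝ (Fin n) → ℝ,
      ContDiff ℝ 1 φ → HasCompactSupport φ →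
      |∫ x, ⟪z k x, gradient φ x⟫| ≤ ∫ x, |φ x| ∂(ν k))
    -- jump (trace) bound: |div z_k| ⌊ S_k ≤ 2‖z_k‖_∞ H^{n-1} ⌊ S_k
    (htrace : ∀ k, (ν k).restrict (S k)
      ≤ ENNReal.ofReal (2 * M) • (μH[(n : ℝ) - 1]).restrict (S k))
    -- (ii) H^{n-1}⌊S_k ⇀ H^{n-1}⌊Σ
    (hmeasconv : ∀ φ : EuclideanSpace ℝ (Fin n) → ℝ,
      Continuous φ → HasCompactSupport φ →
      Tendsto (fun k => ∫ x, φ x ∂((μH[(n : ℝ) - 1]).restrict (S k))) atTop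
        (𝓝 (∫ x, φ x ∂((μH[(n : ℝ) - 1]).restrict Sigma))))
    -- (iii) |div z_k|⌊(ℝⁿ ∖ S_k) ⇀ 0
    (hdivconv : ∀ φ : EuclideanSpace ℝ (Fin n) → ℝ,
      Continuous φ → HasCompactSupport φ →
      Tendsto (fun k => ∫ x, φ x ∂((ν k).restrict (S k)ᶜ)) atTop (𝓝 0)) :
    ∀ φ : EuclideanSpace ℝ (Fin n) → ℝ,
      ContDiff ℝ 1 φ → HasCompactSupport φ → tsupport φ ⊆ Sigmaᶜ →
      ∫ x, ⟪η x, gradient φ x⟫ = 0 := by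
  intro φ hφ hφc hφSigma
  set c := (ENNReal.ofReal (2 * M)).toReal
  have hφabs : Continuous fun x => |φ x| := hφ.continuous.abs
  have hφabsc : HasCompactSupport fun x => |φ x| := hφc.abs
  have hbound : ∀ k, ‖∫ x, ⟪gradient φ x, z k x⟫‖ ≤
      c * ∫ x, |φ x| ∂(μH[(n : ℝ) - 1]).restrict (S k) + ∫ x, |φ x| ∂(ν k).restrict (S k)ᶜ := by
    intro k
    have := isLocallyFiniteMeasure_restrict_of_forall_ball (hSlocfin k)
    simp_rw [real_inner_comm (z k _), Real.norm_eq_abs]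
    exact (hdivmeas k φ hφ hφc).trans <| integral_le_mul_integral_add_integral_restrict_compl
      ENNReal.ofReal_ne_top (htrace k) hφabs hφabsc fun x => abs_nonneg _
  have hsmall : Tendsto (fun k => c * ∫ x, |φ x| ∂(μH[(n : ℝ) - 1]).restrict (S k) +
      ∫ x, |φ x| ∂(ν k).restrict (S k)ᶜ) atTop (𝓝 0) := by
    have hH := hmeasconv _ hφabs hφabsc
    rw [setIntegral_eq_zero_of_tsupport_subset_compl (f := fun x => |φ x|)
      ((tsupport_comp_subset abs_zero φ).trans hφSigma)] at hH
    simpa using (hH.const_mul c).add (hdivconv _ hφabs hφabsc)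
  have hlim := hwstar _ (hφ.integrable_gradient_of_hasCompactSupport hφc)
  simp_rw [real_inner_comm (gradient φ _)]
  exact tendsto_nhds_unique hlim (squeeze_zero_norm hbound hsmall)

/-- if `z_k ⇀ η` weakly-* in `L^∞`, `H^{n-1}⌊S_k ⇀ H^{n-1}⌊Σ`,
and `|div z_k|⌊(ℝⁿ∖S_k) ⇀ 0`, then `div η = 0` on `ℝⁿ ∖ Σ`.
Here `ν k` plays the role of the total variation `|div z_k|`, controlled on
`S_k` by the jump (weak normal trace) formula. -/
theorem divergence_vanishes_off_limit_set
    (n : ℕ) (hn : 2 ≤ n) (M : ℝ)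
    (z : ℕ → EuclideanSpace ℝ (Fin n) → EuclideanSpace ℝ (Fin n))
    (η : EuclideanSpace ℝ (Fin n) → EuclideanSpace ℝ (Fin n))
    (hzmeas : ∀ k, AEStronglyMeasurable (z k) volume)
    (hηmeas : AEStronglyMeasurable η volume)
    (hbd : ∀ k, ∀ᵐ x ∂volume, ‖z k x‖ ≤ M)
    (S : ℕ → Set (EuclideanSpace ℝ (Fin n))) (Sigma : Set (EuclideanSpace ℝ (Fin n)))
    (hSclosed : ∀ k, IsClosed (S k)) (hSigClosed : IsClosed Sigma)
    (hSrect : ∀ k, HausdorffRectifiable n (n - 1) (S k))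
    (hSigRect : HausdorffRectifiable n (n - 1) Sigma)
    (hSlocfin : ∀ k x, ∃ r > (0 : ℝ), μH[(n : ℝ) - 1] (S k ∩ Metric.ball x r) < ⊤)
    (hSiglocfin : ∀ x, ∃ r > (0 : ℝ), μH[(n : ℝ) - 1] (Sigma ∩ Metric.ball x r) < ⊤)
    -- (i) z_k → η in L^∞-w*
    (hwstar : ∀ f : EuclideanSpace ℝ (Fin n) → EuclideanSpace ℝ (Fin n),
      Integrable f volume →
      Tendsto (fun k => ∫ x, ⟪f x, z k x⟫) atTop (𝓝 (∫ x, ⟪f x, η x⟫)))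
    -- ν k = |div z_k| as a finite measure
    (ν : ℕ → Measure (EuclideanSpace ℝ (Fin n)))
    (hνfin : ∀ k, IsFiniteMeasure (ν k))
    (hdivmeas : ∀ k, ∀ φ : EuclideanSpace ℝ (Fin n) → ℝ,
      ContDiff ℝ 1 φ → HasCompactSupport φ →
      |∫ x, ⟪z k x, gradient φ x⟫| ≤ ∫ x, |φ x| ∂(ν k))
    -- jump (trace) bound: |div z_k| ⌊ S_k ≤ 2‖z_k‖_∞ H^{n-1} ⌊ S_k
    (htrace : ∀ k, (ν k).restrict (S k)
      ≤ ENNReal.ofReal (2 * M) • (μH[(n : ℝ) - 1]).restrict (S k))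
    -- (ii) H^{n-1}⌊S_k ⇀ H^{n-1}⌊Σ
    (hmeasconv : ∀ φ : EuclideanSpace ℝ (Fin n) → ℝ,
      Continuous φ → HasCompactSupport φ →
      Tendsto (fun k => ∫ x, φ x ∂((μH[(n : ℝ) - 1]).restrict (S k))) atTop
        (𝓝 (∫ x, φ x ∂((μH[(n : ℝ) - 1]).restrict Sigma))))
    -- (iii) |div z_k|⌊(ℝⁿ ∖ S_k) ⇀ 0
    (hdivconv : ∀ φ : EuclideanSpace ℝ (Fin n) → ℝ,
      Continuous φ → HasCompactSupport φ →
      Tendsto (fun k => ∫ x, φ x ∂((ν k).restrict (S k)ᶜ)) atTop (𝓝 0)) :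
    ∀ φ : EuclideanSpace ℝ (Fin n) → ℝ,
      ContDiff ℝ 1 φ → HasCompactSupport φ → tsupport φ ⊆ Sigmaᶜ →
      ∫ x, ⟪η x, gradient φ x⟫ = 0 :=
  divergence_vanishes_off_limit_set_general n M z η S Sigma hSlocfin hwstar ν hνfin hdivmeas htrace
    hmeasconv hdivconv
end

section
/- Define on the closed upper half-plane the vector field ξ as follows: for i ≥ 1, j = 1,…,2^i − 1 set p_{ij} = (j/2^i, 1/2^i), r_i = 2^{−(i+2)}; choose f_i ∈ C_c^∞((0, r_i)) and set ξ(p) = f_i(|p − p_{ij}|)(p − p_{ij})^⊥ for p in the ball B_{r_i}(p_{ij}) and ξ = 0 elsewhere. Then ξ is divergence-free on {y > 0}, the balls B_{r_i}(p_{ij}) are pairwise disjoint, and for every ψ ∈ C¹_c(ℝ²), ∫_{{y>0}} ξ · ∇ψ dx = 0; hence the weak normal trace of ξ on the line {y = 0} is identically zero. -/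
open MeasureTheory Real RealInnerProductSpace Filter Topology

noncomputable def perpE (v : EuclideanSpace ℝ (Fin 2)) : EuclideanSpace ℝ (Fin 2) :=
  WithLp.toLp 2 ![-(v 1), v 0]

lemma perpE_apply0 (v : EuclideanSpace ℝ (Fin 2)) : perpE v 0 = -(v 1) := rfl
lemma perpE_apply1 (v : EuclideanSpace ℝ (Fin 2)) : perpE v 1 = v 0 := rfl

lemma rot_integral_zero (f : ℝ → ℝ) (hf : Continuous f) (r : ℝ) (hr : 0 < r)
    (hsupp : ∀ t, f t ≠ 0 → t ∈ Set.Ioo 0 r)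
    (ψ : ℂ → ℝ) (hψ : ContDiff ℝ 1 ψ) (c : ℂ) :
    ∫ z : ℂ, f ‖z‖ * (fderiv ℝ ψ (c + z)) (Complex.I * z) = 0 := by
  have hψd : Differentiable ℝ ψ := hψ.differentiable one_ne_zero
  have hfψ : Continuous (fderiv ℝ ψ) := hψ.continuous_fderiv one_ne_zero
  have hf0 : ∀ z : ℂ, r ≤ ‖z‖ → f ‖z‖ = 0 := by
    intro z hz
    by_contra h
    exact absurd (hsupp _ h).2 (not_lt.2 hz)
  set F : ℝ → ℂ → ℝ := fun θ z => f ‖z‖ * ψ (c + Complex.exp ((θ:ℂ) * Complex.I) * z) with hFdef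
  set F' : ℝ → ℂ → ℝ := fun θ z =>
    f ‖z‖ * (fderiv ℝ ψ (c + Complex.exp ((θ:ℂ) * Complex.I) * z))
      (Complex.I * (Complex.exp ((θ:ℂ) * Complex.I) * z)) with hF'def
  have habs : ∀ (θ : ℝ) (z : ℂ), ‖Complex.exp ((θ:ℂ) * Complex.I) * z‖ = ‖z‖ := by
    intro θ z
    rw [norm_mul, Complex.norm_exp_ofReal_mul_I, one_mul]
  -- g is constant
  have hgconst : ∀ θ : ℝ, ∫ z : ℂ, F θ z = ∫ z : ℂ, F 0 z := by
    intro θ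
    have hrot := (rotation (Circle.exp θ)).measurePreserving
    have := hrot.integral_comp (rotation (Circle.exp θ)).toHomeomorph.measurableEmbedding
      (fun w => f ‖w‖ * ψ (c + w))
    calc ∫ z : ℂ, F θ z
        = ∫ z : ℂ, f ‖rotation (Circle.exp θ) z‖ * ψ (c + rotation (Circle.exp θ) z) := by
          congr 1; funext z
          rw [rotation_apply, Circle.coe_exp, habs θ z]
      _ = ∫ w : ℂ, f ‖w‖ * ψ (c + w) := this
      _ = ∫ z : ℂ, F 0 z := by
          congr 1; funext z
          simp [hFdef]
  -- bound on fderiv on closed ball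
  obtain ⟨M, hM⟩ := (isCompact_closedBall c r).exists_bound_of_continuousOn
    (hfψ.continuousOn (s := Metric.closedBall c r))
  have hcurve : ∀ (θ : ℝ) (z : ℂ), HasDerivAt (fun θ : ℝ => c + Complex.exp ((θ:ℂ) * Complex.I) * z)
      (Complex.I * (Complex.exp ((θ:ℂ) * Complex.I) * z)) θ := by
    intro θ z
    have h1 : HasDerivAt (fun θ : ℝ => (θ : ℂ)) 1 θ := by
      simpa using (hasDerivAt_id (θ:ℂ)).comp_ofReal
    have h2 : HasDerivAt (fun θ : ℝ => (θ:ℂ) * Complex.I) Complex.I θ := by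
      simpa using h1.mul_const Complex.I
    have h3 : HasDerivAt (fun θ : ℝ => Complex.exp ((θ:ℂ) * Complex.I))
        (Complex.exp ((θ:ℝ) * Complex.I) * Complex.I) θ := by
      exact (Complex.hasDerivAt_exp ((θ:ℂ) * Complex.I)).comp θ h2
    have h4 := (h3.mul_const z).const_add c
    rw [show Complex.I * (Complex.exp ((θ:ℂ) * Complex.I) * z)
        = Complex.exp ((θ:ℂ) * Complex.I) * Complex.I * z by ring]
    exact h4
  have hFderiv : ∀ (z : ℂ), ∀ θ ∈ Metric.ball (0:ℝ) 1, HasDerivAt (F · z) (F' θ z) θ := by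
    intro z θ _
    exact (((hψd _).hasFDerivAt.comp_hasDerivAt θ (hcurve θ z))).const_mul (f ‖z‖)
  -- continuity of F θ
  have hFcont : ∀ θ : ℝ, Continuous (F θ) := by
    intro θ
    exact (hf.comp continuous_norm).mul
      (hψ.continuous.comp (continuous_const.add (continuous_const.mul continuous_id)))
  -- compact support: F θ and bound vanish outside closedBall 0 r
  have hFsupp : ∀ (g : ℂ → ℝ), (∀ z, r ≤ ‖z‖ → g z = 0) → HasCompactSupport g := by
    intro g hg
    apply HasCompactSupport.intro (isCompact_closedBall (0:ℂ) r)
    intro z hz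
    exact hg z (le_of_lt (by simpa [Complex.dist_eq, Metric.mem_closedBall] using hz))
  have hFint : Integrable (F 0) := by
    refine (hFcont 0).integrable_of_hasCompactSupport (hFsupp _ ?_)
    intro z hz
    simp only [hFdef]
    rw [hf0 z hz, zero_mul]
  set bound : ℂ → ℝ := fun z => |f ‖z‖| * (M * ‖z‖) with hbdef
  have hbound_int : Integrable bound := by
    refine Continuous.integrable_of_hasCompactSupport ?_ (hFsupp _ ?_)
    · exact ((hf.comp continuous_norm).abs).mul (continuous_const.mul continuous_norm)
    · intro z hz
      simp only [hbdef]
      rw [hf0 z hz, abs_zero, zero_mul]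
  have h_bound : ∀ z : ℂ, ∀ θ ∈ Metric.ball (0:ℝ) 1, ‖F' θ z‖ ≤ bound z := by
    intro z θ _
    by_cases hz : f ‖z‖ = 0
    · simp only [hF'def, hbdef]
      rw [hz, zero_mul, abs_zero, zero_mul, norm_zero]
    · have hzr : ‖z‖ < r := (hsupp _ hz).2
      have hmem : c + Complex.exp ((θ:ℂ) * Complex.I) * z ∈ Metric.closedBall c r := by
        rw [Metric.mem_closedBall, dist_eq_norm, add_sub_cancel_left, habs]
        exact hzr.le
      have h1 : ‖(fderiv ℝ ψ (c + Complex.exp ((θ:ℂ) * Complex.I) * z))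
          (Complex.I * (Complex.exp ((θ:ℂ) * Complex.I) * z))‖ ≤ M * ‖z‖ := by
        calc ‖(fderiv ℝ ψ _) (Complex.I * (Complex.exp ((θ:ℂ) * Complex.I) * z))‖
            ≤ ‖fderiv ℝ ψ (c + Complex.exp ((θ:ℂ) * Complex.I) * z)‖ *
              ‖Complex.I * (Complex.exp ((θ:ℂ) * Complex.I) * z)‖ :=
              ContinuousLinearMap.le_opNorm _ _
          _ ≤ M * ‖z‖ := by
              rw [norm_mul, Complex.norm_I, one_mul, habs]
              exact mul_le_mul_of_nonneg_right (hM _ hmem) (norm_nonneg z)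
      calc ‖F' θ z‖ = |f ‖z‖| * ‖(fderiv ℝ ψ _) (Complex.I * (Complex.exp ((θ:ℂ) * Complex.I) * z))‖ := by
            rw [hF'def]; simp [abs_mul, Real.norm_eq_abs]
        _ ≤ |f ‖z‖| * (M * ‖z‖) := mul_le_mul_of_nonneg_left h1 (abs_nonneg _)
  have hF'cont : Continuous (F' 0) := by
    have : Continuous (fun z : ℂ => (fderiv ℝ ψ (c + Complex.exp ((0:ℂ) * Complex.I) * z))
        (Complex.I * (Complex.exp ((0:ℂ) * Complex.I) * z))) := by
      apply Continuous.clm_apply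
      · exact hfψ.comp (continuous_const.add (continuous_const.mul continuous_id))
      · exact continuous_const.mul (continuous_const.mul continuous_id)
    exact (hf.comp continuous_norm).mul this
  have key := hasDerivAt_integral_of_dominated_loc_of_deriv_le (μ := volume) (x₀ := (0:ℝ))
    (F := F) (F' := F') (bound := bound) (Metric.ball_mem_nhds 0 one_pos)
    (Eventually.of_forall fun θ => (hFcont θ).aestronglyMeasurable)
    hFint hF'cont.aestronglyMeasurable
    (Eventually.of_forall h_bound) hbound_int
    (Eventually.of_forall hFderiv)
  have hgz : (fun θ : ℝ => ∫ z : ℂ, F θ z) = fun _ => ∫ z : ℂ, F 0 z := funext hgconst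
  have hD : (∫ z : ℂ, F' 0 z) = 0 := by
    have h1 : HasDerivAt (fun θ : ℝ => ∫ z : ℂ, F θ z) (∫ z : ℂ, F' 0 z) 0 := key.2
    rw [hgz] at h1
    exact h1.unique (hasDerivAt_const _ _)
  rw [← hD]
  congr 1; funext z
  simp [hF'def]

lemma core_eucl (f : ℝ → ℝ) (hf : Continuous f) (r : ℝ) (hr : 0 < r)
    (hsupp : ∀ t, f t ≠ 0 → t ∈ Set.Ioo 0 r)
    (ψ : EuclideanSpace ℝ (Fin 2) → ℝ) (hψ : ContDiff ℝ 1 ψ) (p₀ : EuclideanSpace ℝ (Fin 2)) :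
    ∫ q : EuclideanSpace ℝ (Fin 2), f ‖q - p₀‖ * (fderiv ℝ ψ q) (perpE (q - p₀)) = 0 := by
  set j : ℂ ≃ₗᵢ[ℝ] EuclideanSpace ℝ (Fin 2) := Complex.orthonormalBasisOneI.repr with hj
  have hjperp : ∀ w : ℂ, perpE (j w) = j (Complex.I * w) := by
    intro w
    ext x
    fin_cases x
    · show perpE (j w) 0 = _
      rw [perpE_apply0, hj]
      simp [Complex.orthonormalBasisOneI_repr_apply]
    · show perpE (j w) 1 = _
      rw [perpE_apply1, hj]
      simp [Complex.orthonormalBasisOneI_repr_apply]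
  set φ : ℂ → ℝ := fun z => ψ (j z) with hφ
  have hφc : ContDiff ℝ 1 φ := hψ.comp j.toContinuousLinearEquiv.toContinuousLinearMap.contDiff
  have hfder : ∀ (z : ℂ) (w : ℂ), (fderiv ℝ ψ (j z)) (j w) = (fderiv ℝ φ z) w := by
    intro z w
    have h := j.toContinuousLinearEquiv.comp_right_fderiv (f := ψ) (x := z)
    have h2 : fderiv ℝ φ z = (fderiv ℝ ψ (j z)).comp (j.toContinuousLinearEquiv : ℂ →L[ℝ] EuclideanSpace ℝ (Fin 2)) := h
    rw [h2]
    rfl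
  set c : ℂ := j.symm p₀ with hc
  have hp₀ : p₀ = j c := by rw [hc, LinearIsometryEquiv.apply_symm_apply]
  have h1 : ∫ q : EuclideanSpace ℝ (Fin 2), f ‖q - p₀‖ * (fderiv ℝ ψ q) (perpE (q - p₀))
      = ∫ z : ℂ, f ‖z - c‖ * (fderiv ℝ φ z) (Complex.I * (z - c)) := by
    rw [← j.measurePreserving.integral_comp j.toHomeomorph.measurableEmbedding
      (fun q => f ‖q - p₀‖ * (fderiv ℝ ψ q) (perpE (q - p₀)))]
    congr 1; funext z
    have h2 : j z - p₀ = j (z - c) := by rw [hp₀, ← j.map_sub]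
    rw [h2, j.norm_map, hjperp, hfder]
  rw [h1, ← MeasureTheory.integral_add_left_eq_self
      (fun z : ℂ => f ‖z - c‖ * (fderiv ℝ φ z) (Complex.I * (z - c))) c]
  simp only [add_sub_cancel_left]
  exact rot_integral_zero f hf r hr hsupp φ hφc c

lemma coord_le_dist (x y : EuclideanSpace ℝ (Fin 2)) (k : Fin 2) : |x k - y k| ≤ dist x y := by
  rw [EuclideanSpace.dist_eq]
  have h1 : |x k - y k| = √(dist (x k) (y k) ^ 2) := by
    rw [Real.sqrt_sq_eq_abs, Real.dist_eq, abs_abs]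
  rw [h1]
  apply Real.sqrt_le_sqrt
  exact Finset.single_le_sum (f := fun i => dist (x i) (y i) ^ 2) (fun i _ => sq_nonneg _) (Finset.mem_univ k)

lemma balls_disjoint (p : ℕ → ℕ → EuclideanSpace ℝ (Fin 2))
    (hp0 : ∀ i j, p i j 0 = (j : ℝ) / 2 ^ i)
    (hp1 : ∀ i j, p i j 1 = (1 : ℝ) / 2 ^ i) :
    ∀ i j i' j' : ℕ, 1 ≤ i → 1 ≤ j → j ≤ 2 ^ i - 1 → 1 ≤ i' → 1 ≤ j' → j' ≤ 2 ^ i' - 1 →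
      (i, j) ≠ (i', j') →
      Disjoint (Metric.ball (p i j) ((1 : ℝ) / 2 ^ (i + 2)))
        (Metric.ball (p i' j') ((1 : ℝ) / 2 ^ (i' + 2))) := by
  have vert : ∀ i i' j j' : ℕ, i < i' →
      (1:ℝ) / 2 ^ (i+2) + 1 / 2 ^ (i'+2) ≤ dist (p i j) (p i' j') := by
    intro i i' j j' hii
    have h1 : |p i j 1 - p i' j' 1| ≤ dist (p i j) (p i' j') := coord_le_dist _ _ 1
    rw [hp1, hp1] at h1
    have hpos : (0:ℝ) < 2 ^ i := by positivity
    have e1 : (1:ℝ) / 2 ^ i' ≤ 1 / 2 ^ (i+1) := by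
      apply one_div_le_one_div_of_le (by positivity)
      exact pow_le_pow_right₀ one_le_two hii
    have e2 : (1:ℝ) / 2 ^ (i'+2) ≤ 1 / 2 ^ (i+3) := by
      apply one_div_le_one_div_of_le (by positivity)
      exact pow_le_pow_right₀ one_le_two (by omega)
    have hlt : (1:ℝ) / 2 ^ i' < 1 / 2 ^ i := by
      apply one_div_lt_one_div_of_lt hpos
      exact pow_lt_pow_right₀ one_lt_two hii
    have habs : |(1:ℝ) / 2 ^ i - 1 / 2 ^ i'| = 1 / 2 ^ i - 1 / 2 ^ i' := by
      rw [abs_of_pos]; linarith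
    rw [habs] at h1
    have c1 : (1:ℝ) / 2 ^ (i+1) = 1 / 2 ^ i / 2 := by rw [pow_add]; ring
    have c2 : (1:ℝ) / 2 ^ (i+2) = 1 / 2 ^ i / 4 := by rw [pow_add]; ring
    have c3 : (1:ℝ) / 2 ^ (i+3) = 1 / 2 ^ i / 8 := by rw [pow_add]; ring
    linarith
  intro i j i' j' hi hj hj2 hi' hj' hj2' hne
  apply Metric.ball_disjoint_ball
  rcases Nat.lt_trichotomy i i' with h | h | h
  · exact vert i i' j j' h
  · subst h
    have hjj : j ≠ j' := fun hEq => hne (by rw [hEq])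
    have h1 : |p i j 0 - p i j' 0| ≤ dist (p i j) (p i j') := coord_le_dist _ _ 0
    rw [hp0, hp0] at h1
    have hpos : (0:ℝ) < 2 ^ i := by positivity
    have habs : |(j:ℝ) / 2 ^ i - (j':ℝ) / 2 ^ i| = |(j:ℝ) - j'| / 2 ^ i := by
      rw [div_sub_div_same, abs_div, abs_of_pos hpos]
    have h2 : (1:ℤ) ≤ |(j:ℤ) - j'| :=
      Int.one_le_abs (sub_ne_zero.mpr (by exact_mod_cast hjj))
    have hone : (1:ℝ) ≤ |(j:ℝ) - (j':ℝ)| := by exact_mod_cast h2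
    rw [habs] at h1
    have h3 : (1:ℝ) / 2 ^ i ≤ dist (p i j) (p i j') := by
      refine le_trans ?_ h1
      gcongr
    have c2 : (1:ℝ) / 2 ^ (i+2) = 1 / 2 ^ i / 4 := by rw [pow_add]; ring
    have hpos' : (0:ℝ) < 1 / 2 ^ i := by positivity
    linarith
  · rw [dist_comm]
    have := vert i' i j' j h
    linarith

/-- the twisting divergence-free vector field on the upper
half-plane built from rotational bumps around the points
`p_{ij} = (j/2^i, 1/2^i)` with radii `r_i = 2^{-(i+2)}`: the balls are pairwise
disjoint and `∫_{y>0} ξ·∇ψ = 0` for every `ψ ∈ C¹_c(ℝ²)`, i.e. `ξ` is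
divergence-free on `{y > 0}` and its weak normal trace on `{y = 0}` vanishes. -/
theorem twisting_field_zero_normal_trace
    (f : ℕ → ℝ → ℝ)
    (hfsmooth : ∀ i, ContDiff ℝ (⊤ : ℕ∞) (f i))
    (hfsupp : ∀ i : ℕ, 1 ≤ i → ∀ t : ℝ, f i t ≠ 0 → t ∈ Set.Ioo 0 ((1 : ℝ) / 2 ^ (i + 2)))
    (p : ℕ → ℕ → EuclideanSpace ℝ (Fin 2))
    (hp0 : ∀ i j, p i j 0 = (j : ℝ) / 2 ^ i)
    (hp1 : ∀ i j, p i j 1 = (1 : ℝ) / 2 ^ i)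
    (ξ : EuclideanSpace ℝ (Fin 2) → EuclideanSpace ℝ (Fin 2))
    -- ξ(q) = f_i(|q - p_{ij}|) (q - p_{ij})^⊥ inside each ball B_{r_i}(p_{ij})
    (hξball : ∀ i : ℕ, 1 ≤ i → ∀ j : ℕ, 1 ≤ j → j ≤ 2 ^ i - 1 →
      ∀ q ∈ Metric.ball (p i j) ((1 : ℝ) / 2 ^ (i + 2)),
        (ξ q 0 = f i ‖q - p i j‖ * (-(q - p i j) 1)
          ∧ ξ q 1 = f i ‖q - p i j‖ * ((q - p i j) 0)))
    -- ξ = 0 outside all the balls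
    (hξzero : ∀ q : EuclideanSpace ℝ (Fin 2),
      (∀ i : ℕ, 1 ≤ i → ∀ j : ℕ, 1 ≤ j → j ≤ 2 ^ i - 1 →
        q ∉ Metric.ball (p i j) ((1 : ℝ) / 2 ^ (i + 2))) → ξ q = 0) :
    -- the balls are pairwise disjoint
    (∀ i j i' j' : ℕ, 1 ≤ i → 1 ≤ j → j ≤ 2 ^ i - 1 → 1 ≤ i' → 1 ≤ j' → j' ≤ 2 ^ i' - 1 →
      (i, j) ≠ (i', j') →
      Disjoint (Metric.ball (p i j) ((1 : ℝ) / 2 ^ (i + 2)))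
        (Metric.ball (p i' j') ((1 : ℝ) / 2 ^ (i' + 2))))
    -- ξ is divergence-free on the open upper half-plane
    ∧ (∀ ψ : EuclideanSpace ℝ (Fin 2) → ℝ, ContDiff ℝ 1 ψ → HasCompactSupport ψ →
        tsupport ψ ⊆ {q : EuclideanSpace ℝ (Fin 2) | 0 < q 1} →
        ∫ q, ⟪ξ q, gradient ψ q⟫ = 0)
    -- zero weak normal trace on {y = 0}: ∫_{y>0} ξ·∇ψ = 0 for all ψ ∈ C¹_c(ℝ²)
    ∧ (∀ ψ : EuclideanSpace ℝ (Fin 2) → ℝ, ContDiff ℝ 1 ψ → HasCompactSupport ψ →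
        ∫ q in {q : EuclideanSpace ℝ (Fin 2) | 0 < q 1}, ⟪ξ q, gradient ψ q⟫ = 0) := by
  classical
  have hA := balls_disjoint p hp0 hp1
  have key : ∀ U : Set (EuclideanSpace ℝ (Fin 2)), MeasurableSet U →
      (∀ i j : ℕ, 1 ≤ i → 1 ≤ j → j ≤ 2 ^ i - 1 →
        Metric.ball (p i j) ((1 : ℝ) / 2 ^ (i + 2)) ⊆ U) →
      ∀ ψ : EuclideanSpace ℝ (Fin 2) → ℝ, ContDiff ℝ 1 ψ →
      ∫ q in U, ⟪ξ q, gradient ψ q⟫ = 0 := by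
    intro U hU hballs ψ hψ
    set F : EuclideanSpace ℝ (Fin 2) → ℝ := fun q => ⟪ξ q, gradient ψ q⟫ with hFdef
    set S : ℕ × ℕ → Set (EuclideanSpace ℝ (Fin 2)) := fun k =>
      if 1 ≤ k.1 ∧ 1 ≤ k.2 ∧ k.2 ≤ 2 ^ k.1 - 1 then
        Metric.ball (p k.1 k.2) ((1 : ℝ) / 2 ^ (k.1 + 2)) else ∅ with hSdef
    have hSm : ∀ k, MeasurableSet (S k) := by
      intro k
      simp only [hSdef]
      split_ifs
      exacts [measurableSet_ball, MeasurableSet.empty]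
    have hSd : Pairwise (Function.onFun Disjoint S) := by
      intro k k' hkk
      simp only [Function.onFun, hSdef]
      split_ifs with h1 h2
      · exact hA k.1 k.2 k'.1 k'.2 h1.1 h1.2.1 h1.2.2 h2.1 h2.2.1 h2.2.2
          (by simpa using hkk)
      all_goals simp
    have hSU : (⋃ k, S k) ⊆ U := by
      intro q hq
      rw [Set.mem_iUnion] at hq
      obtain ⟨k, hk⟩ := hq
      simp only [hSdef] at hk
      split_ifs at hk with h
      · exact hballs k.1 k.2 h.1 h.2.1 h.2.2 hk
      · exact absurd hk (Set.notMem_empty q)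
    have hFzero : ∀ q ∉ ⋃ k, S k, F q = 0 := by
      intro q hq
      have hz : ξ q = 0 := by
        apply hξzero
        intro i hi j hj hj2 hmem
        apply hq
        rw [Set.mem_iUnion]
        refine ⟨(i, j), ?_⟩
        simp only [hSdef]
        rw [if_pos ⟨hi, hj, hj2⟩]
        exact hmem
      simp only [hFdef, hz, inner_zero_left]
    have hball0 : ∀ i j : ℕ, 1 ≤ i → 1 ≤ j → j ≤ 2 ^ i - 1 →
        ∫ q in Metric.ball (p i j) ((1 : ℝ) / 2 ^ (i + 2)), F q = 0 := by
      intro i j hi hj hj2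
      set r : ℝ := (1 : ℝ) / 2 ^ (i + 2) with hrdef
      have hrpos : 0 < r := by positivity
      set G : EuclideanSpace ℝ (Fin 2) → ℝ :=
        fun q => f i ‖q - p i j‖ * (fderiv ℝ ψ q) (perpE (q - p i j)) with hGdef
      have hEq : Set.EqOn F G (Metric.ball (p i j) r) := by
        intro q hq
        obtain ⟨h0, h1⟩ := hξball i hi j hj hj2 q hq
        have hxi : ξ q = f i ‖q - p i j‖ • perpE (q - p i j) := by
          ext x
          fin_cases x
          · show ξ q 0 = (f i ‖q - p i j‖ • perpE (q - p i j)) 0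
            rw [h0]
            simp [perpE_apply0]
          · show ξ q 1 = (f i ‖q - p i j‖ • perpE (q - p i j)) 1
            rw [h1]
            simp [perpE_apply1]
        have h2 : ⟪gradient ψ q, f i ‖q - p i j‖ • perpE (q - p i j)⟫
            = (fderiv ℝ ψ q) (f i ‖q - p i j‖ • perpE (q - p i j)) :=
          InnerProductSpace.toDual_symm_apply
        simp only [hFdef, hGdef, hxi]
        rw [real_inner_comm, h2, ContinuousLinearMap.map_smul, smul_eq_mul]
      have hfi0 : ∀ q : EuclideanSpace ℝ (Fin 2), q ∉ Metric.ball (p i j) r → G q = 0 := by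
        intro q hq
        have hge : r ≤ ‖q - p i j‖ := by
          rw [Metric.mem_ball, not_lt] at hq
          rwa [← dist_eq_norm]
        have : f i ‖q - p i j‖ = 0 := by
          by_contra h
          exact absurd (hfsupp i hi _ h).2 (not_lt.2 hge)
        simp only [hGdef]
        rw [this, zero_mul]
      calc ∫ q in Metric.ball (p i j) r, F q
          = ∫ q in Metric.ball (p i j) r, G q := setIntegral_congr_fun measurableSet_ball hEq
        _ = ∫ q, G q := setIntegral_eq_integral_of_forall_compl_eq_zero hfi0
        _ = 0 := core_eucl (f i) (hfsmooth i).continuous r hrpos (hfsupp i hi) ψ hψ (p i j)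
    by_cases hInt : IntegrableOn F U
    · have hind : F = (⋃ k, S k).indicator F := by
        funext q
        by_cases h : q ∈ ⋃ k, S k
        · rw [Set.indicator_of_mem h]
        · rw [Set.indicator_of_notMem h]
          exact hFzero q h
      have hSk0 : ∀ k : ℕ × ℕ, ∫ q in S k, F q = 0 := by
        intro k
        simp only [hSdef]
        split_ifs with h
        · exact hball0 k.1 k.2 h.1 h.2.1 h.2.2
        · simp
      calc ∫ q in U, F q = ∫ q in U, (⋃ k, S k).indicator F q := by rw [← hind]
        _ = ∫ q in U ∩ ⋃ k, S k, F q := by rw [setIntegral_indicator (MeasurableSet.iUnion hSm)]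
        _ = ∫ q in ⋃ k, S k, F q := by rw [Set.inter_eq_self_of_subset_right hSU]
        _ = ∑' k, ∫ q in S k, F q := integral_iUnion hSm hSd (hInt.mono_set hSU)
        _ = 0 := by simp only [hSk0]; exact tsum_zero
    · exact integral_undef hInt
  have hUopen : MeasurableSet {q : EuclideanSpace ℝ (Fin 2) | 0 < q 1} := by
    have : IsOpen {q : EuclideanSpace ℝ (Fin 2) | 0 < q 1} :=
      isOpen_lt continuous_const (EuclideanSpace.proj (1 : Fin 2)).continuous
    exact this.measurableSet
  have hballsU : ∀ i j : ℕ, 1 ≤ i → 1 ≤ j → j ≤ 2 ^ i - 1 →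
      Metric.ball (p i j) ((1 : ℝ) / 2 ^ (i + 2)) ⊆
        {q : EuclideanSpace ℝ (Fin 2) | 0 < q 1} := by
    intro i j hi hj hj2 q hq
    rw [Metric.mem_ball] at hq
    have h1 : |q 1 - p i j 1| ≤ dist q (p i j) := coord_le_dist _ _ 1
    rw [hp1] at h1
    have h2 : |q 1 - 1 / 2 ^ i| < 1 / 2 ^ (i + 2) := lt_of_le_of_lt h1 hq
    have h3 : (1:ℝ) / 2 ^ (i + 2) ≤ 1 / 2 ^ i := by
      apply one_div_le_one_div_of_le (by positivity)
      exact pow_le_pow_right₀ one_le_two (by omega)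
    have h4 := abs_lt.1 h2
    have h5 : (0:ℝ) < 1 / 2 ^ (i + 2) := by positivity
    show 0 < q 1
    linarith [h4.1]
  refine ⟨hA, ?_, ?_⟩
  · intro ψ hψ _ _
    rw [← setIntegral_univ]
    exact key Set.univ MeasurableSet.univ (fun i j _ _ _ => Set.subset_univ _) ψ hψ
  · intro ψ hψ _
    exact key _ hUopen hballsU ψ hψ
end
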